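/- arXiv:2009.07401 — 2 statements merged into one kernel-verified Lean document; each statement's English description precedes it below -/
import Mathlib

section
/- Let X be a vector lattice with X~ separating points of X, and suppose the canonical image of X is a regular sublattice of X~~. If a net x_α bbuo-converges to x in X, then x̂_α order converges to x̂ in X~~. -/
/-!
`X~~` is a Dedekind complete vector lattice: by Riesz–Kantorovich,
`(F ⊔ G) x = sup {F y + G (x - y) | 0 ≤ y ≤ x}` for `x ≥ 0`, and a bounded directed family has
the pointwise supremum on the positive cone. By Hahn–Banach, `x ↦ x̂` is a lattice homomorphism.

Let `a_β = |x̂_β - x̂|` and let `D` be the set of eventual upper bounds of `a`. Eventual order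
boundedness makes `D` nonempty; `D` is directed downwards and sandwiches `x̂_β` around `x̂`, so it
remains to show `inf D = 0`. Suprema of tails of `a` lie in `D`, so by infinite distributivity a
lower bound `c` of `D` satisfies `c ⊓ m ≤ m'` whenever `a_β ⊓ m ≤ m'` eventually. For `u ≥ 0` in
`X` and `d` in a set witnessing `|x_β - x| ⊓ u →o 0` this gives `c ⊓ û ≤ d̂`, hence `c ⊓ û ≤ 0` by
regularity. Taking `u = |x_β - x|` yields `c ⊓ a_β ≤ 0` for every `β`, and then `c = c ⊓ c ≤ 0`.
-/

set_option linter.unusedSectionVars false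
set_option maxHeartbeats 1000000

open Filter Set

section ODual

variable (E : Type*) [AddCommGroup E] [Preorder E] [Module ℝ E]

/-- The order (bounded) dual: linear functionals bounded on order intervals. -/
noncomputable def obDual : Submodule ℝ (E →ₗ[ℝ] ℝ) where
  carrier := {f | ∀ w : E, ∃ M : ℝ, ∀ x : E, -w ≤ x → x ≤ w → |f x| ≤ M}
  zero_mem' := fun w => ⟨0, fun x _ _ => by simp⟩
  add_mem' := fun {f g} hf hg w => by
    obtain ⟨M, hM⟩ := hf w
    obtain ⟨N, hN⟩ := hg w
    refine ⟨M + N, fun x h1 h2 => ?_⟩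
    calc |(f + g) x| = |f x + g x| := by simp
    _ ≤ |f x| + |g x| := abs_add_le _ _
    _ ≤ M + N := add_le_add (hM x h1 h2) (hN x h1 h2)
  smul_mem' := fun c f hf => by
    intro w
    obtain ⟨M, hM⟩ := hf w
    refine ⟨|c| * M, fun x h1 h2 => ?_⟩
    calc |(c • f) x| = |c| * |f x| := by simp [abs_mul]
    _ ≤ |c| * M := mul_le_mul_of_nonneg_left (hM x h1 h2) (abs_nonneg c)

/-- The pointwise-on-positive-elements (pre)order on a space of functionals. -/
instance instSubPre (Y : Submodule ℝ (E →ₗ[ℝ] ℝ)) : Preorder Y where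
  le f g := ∀ x : E, 0 ≤ x → (f : E →ₗ[ℝ] ℝ) x ≤ (g : E →ₗ[ℝ] ℝ) x
  le_refl f x _ := le_rfl
  le_trans f g h h1 h2 x hx := (h1 x hx).trans (h2 x hx)

variable {E}

theorem subPre_le_iff {Y : Submodule ℝ (E →ₗ[ℝ] ℝ)} {f g : Y} :
    f ≤ g ↔ ∀ x : E, 0 ≤ x → (f : E →ₗ[ℝ] ℝ) x ≤ (g : E →ₗ[ℝ] ℝ) x := Iff.rfl

/-- Order convergence of a net to a limit (sandwich form: eventually
`l - d ≤ x_α ≤ l + d` for every `d` in a set directed downward to `0`). -/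
def OConvTo {ι : Type*} [Preorder ι] (x : ι → E) (l : E) : Prop :=
  ∃ D : Set E, D.Nonempty ∧ DirectedOn (· ≥ ·) D ∧ IsGLB D 0 ∧
    ∀ d ∈ D, ∃ α₀ : ι, ∀ α, α₀ ≤ α → l - d ≤ x α ∧ x α ≤ l + d

/-- Order continuity of a linear functional: `f(x_α) → 0` whenever `x_α ↓ 0`. -/
def OrdContE (f : E →ₗ[ℝ] ℝ) : Prop :=
  ∀ D : Set E, D.Nonempty → DirectedOn (· ≥ ·) D → IsGLB D 0 →
    ∀ ε : ℝ, 0 < ε → ∃ d ∈ D, ∀ e ∈ D, e ≤ d → |f e| < ε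

end ODual

section VL

variable (X : Type*) [Lattice X] [AddCommGroup X]
  [CovariantClass X X (· + ·) (· ≤ ·)] [Module ℝ X] [PosSMulMono ℝ X]

variable {X} in
/-- Unbounded order convergence: `|x_α - l| ⊓ u →o 0` for every `u ≥ 0`. -/
def uoConvTo {ι : Type*} [Preorder ι] (x : ι → X) (l : X) : Prop :=
  ∀ u : X, 0 ≤ u → OConvTo (fun α => |x α - l| ⊓ u) (0 : X)

/-- The canonical evaluation of `x ∈ X` on a space `Y` of functionals on `X`. -/
def hatFun (Y : Submodule ℝ (X →ₗ[ℝ] ℝ)) (x : X) : Y →ₗ[ℝ] ℝ where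
  toFun f := (f : X →ₗ[ℝ] ℝ) x
  map_add' f g := by simp
  map_smul' c f := by simp

theorem hatFun_mem (Y : Submodule ℝ (X →ₗ[ℝ] ℝ)) (x : X) :
    hatFun X Y x ∈ obDual Y := by
  intro w
  refine ⟨(w : X →ₗ[ℝ] ℝ) (x⁺) + (w : X →ₗ[ℝ] ℝ) (x⁻), fun f h1 h2 => ?_⟩
  have hp : (0 : X) ≤ x⁺ := posPart_nonneg x
  have hn : (0 : X) ≤ x⁻ := negPart_nonneg x
  have e1 := (subPre_le_iff.mp h1) _ hp
  have e2 := (subPre_le_iff.mp h2) _ hp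
  have e3 := (subPre_le_iff.mp h1) _ hn
  have e4 := (subPre_le_iff.mp h2) _ hn
  have c1 : -((w : X →ₗ[ℝ] ℝ) (x⁺)) ≤ (f : X →ₗ[ℝ] ℝ) (x⁺) := by simpa using e1
  have c3 : -((w : X →ₗ[ℝ] ℝ) (x⁻)) ≤ (f : X →ₗ[ℝ] ℝ) (x⁻) := by simpa using e3
  have key : (f : X →ₗ[ℝ] ℝ) x
      = (f : X →ₗ[ℝ] ℝ) (x⁺) - (f : X →ₗ[ℝ] ℝ) (x⁻) := by
    rw [← map_sub, posPart_sub_negPart]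
  show |(f : X →ₗ[ℝ] ℝ) x| ≤ _
  rw [key]
  have a1 : |(f : X →ₗ[ℝ] ℝ) (x⁺)| ≤ (w : X →ₗ[ℝ] ℝ) (x⁺) := abs_le.mpr ⟨c1, e2⟩
  have a2 : |(f : X →ₗ[ℝ] ℝ) (x⁻)| ≤ (w : X →ₗ[ℝ] ℝ) (x⁻) := abs_le.mpr ⟨c3, e4⟩
  have := abs_sub ((f : X →ₗ[ℝ] ℝ) (x⁺)) ((f : X →ₗ[ℝ] ℝ) (x⁻))
  linarith

/-- The canonical embedding of `X` into the order dual of `Y ⊆ X~`. -/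
def hatEl (Y : Submodule ℝ (X →ₗ[ℝ] ℝ)) (x : X) : obDual Y :=
  ⟨hatFun X Y x, hatFun_mem X Y x⟩

/-- The order of `X~~` (same as `instSubPre`, which instance search no longer finds here). -/
noncomputable instance instBidualPre : Preorder ↥(obDual ↥(obDual X)) :=
  instSubPre ↥(obDual X) (obDual ↥(obDual X))

/-- `X~` separates the points of `X`. -/
def SepPoints : Prop := ∀ x : X, x ≠ 0 → ∃ f : obDual X, (f : X →ₗ[ℝ] ℝ) x ≠ 0

/-- The canonical image of `X` in `X~~` is a regular sublattice:
`x_α ↓ 0` in `X` implies `x̂_α ↓ 0` in `X~~`. -/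
def HatRegular : Prop :=
  ∀ D : Set X, D.Nonempty → DirectedOn (· ≥ ·) D → IsGLB D 0 →
    IsGLB (hatEl X (obDual X) '' D) (0 : obDual ↥(obDual X))

variable {X} in
/-- The net `x̂_α` is eventually order bounded in `X~~`. -/
def HatEvOB {ι : Type*} [Preorder ι] (x : ι → X) : Prop :=
  ∃ (b t : obDual ↥(obDual X)) (α₀ : ι), ∀ α, α₀ ≤ α →
    b ≤ hatEl X (obDual X) (x α) ∧ hatEl X (obDual X) (x α) ≤ t

variable {X} in
/-- Bidual bounded uo-convergence. -/
def bbuoConvTo {ι : Type*} [Preorder ι] (x : ι → X) (l : X) : Prop :=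
  uoConvTo x l ∧ HatEvOB x

/-- `X` has the `b`-property: every subset of `X` whose canonical image is
order bounded in `X~~` is order bounded in `X`. -/
def HasBProp : Prop :=
  ∀ A : Set X,
    (∃ b t : obDual ↥(obDual X), ∀ a ∈ A,
        b ≤ hatEl X (obDual X) a ∧ hatEl X (obDual X) a ≤ t) →
    ∃ b t : X, ∀ a ∈ A, b ≤ a ∧ a ≤ t

/-- The Archimedean property for a lattice-ordered group. -/
def IsArch : Prop := ∀ x y : X, 0 ≤ x → (∀ n : ℕ, n • x ≤ y) → x = 0

end VL

open scoped Pointwise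

/-- The positive cone is generating and has the Riesz decomposition property. -/
structure RieszDecomposition (E : Type*) [AddCommGroup E] [Preorder E] : Prop where
  exists_sub : ∀ x : E, ∃ p n : E, 0 ≤ p ∧ 0 ≤ n ∧ x = p - n
  decompose : ∀ x y z : E, 0 ≤ x → x ≤ y + z → 0 ≤ y → 0 ≤ z →
    ∃ v, 0 ≤ v ∧ v ≤ y ∧ 0 ≤ x - v ∧ x - v ≤ z

theorem rieszDecomposition_of_lattice {E : Type*} [Lattice E] [AddCommGroup E] [AddLeftMono E] :
    RieszDecomposition E where
  exists_sub x := ⟨x⁺, x⁻, posPart_nonneg x, negPart_nonneg x, (posPart_sub_negPart x).symm⟩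
  decompose x y z hx hxyz hy hz := by
    refine ⟨x ⊓ y, le_inf hx hy, inf_le_right, sub_nonneg.2 inf_le_left, ?_⟩
    rw [inf_eq_sub_posPart_sub, sub_sub_cancel]
    exact sup_le (sub_le_iff_le_add'.2 hxyz) hz

theorem posPart_smul_of_pos {M : Type*} [Lattice M] [AddCommGroup M] [Module ℝ M]
    [PosSMulMono ℝ M] {c : ℝ} (hc : 0 < c) (v : M) : (c • v)⁺ = c • v⁺ := by
  have h := (OrderIso.smulRight (β := M) hc).map_sup v 0
  rw [OrderIso.smulRight_apply, OrderIso.smulRight_apply, OrderIso.smulRight_apply,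
    smul_zero] at h
  rw [posPart_def, posPart_def, h]

section OrderBoundedDual

variable {E : Type*} [AddCommGroup E] [Preorder E] [Module ℝ E]

instance instSubAddLeftMono (Y : Submodule ℝ (E →ₗ[ℝ] ℝ)) : AddLeftMono Y :=
  ⟨fun _ _ _ hle x hx => by simpa using hle x hx⟩

instance instSubPosSMulMono (Y : Submodule ℝ (E →ₗ[ℝ] ℝ)) : PosSMulMono ℝ Y :=
  ⟨fun _ hc _ _ hle x hx => by simpa using mul_le_mul_of_nonneg_left (hle x hx) hc⟩

theorem obDual_ext_of_nonneg (hE : RieszDecomposition E) {F G : obDual E}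
    (h : ∀ x, 0 ≤ x → (F : E →ₗ[ℝ] ℝ) x = (G : E →ₗ[ℝ] ℝ) x) : F = G := by
  refine Subtype.ext (LinearMap.ext fun x => ?_)
  obtain ⟨p, n, hp, hn, rfl⟩ := hE.exists_sub x
  rw [map_sub, map_sub, h p hp, h n hn]

def rieszKantorovichSet (F G : obDual E) (x : E) : Set ℝ :=
  (fun y => (F : E →ₗ[ℝ] ℝ) y + (G : E →ₗ[ℝ] ℝ) (x - y)) '' Icc 0 x

theorem apply_add_apply_sub_mem_rieszKantorovichSet {F G : obDual E} {x y : E} (hy : 0 ≤ y)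
    (hyx : y ≤ x) :
    (F : E →ₗ[ℝ] ℝ) y + (G : E →ₗ[ℝ] ℝ) (x - y) ∈ rieszKantorovichSet F G x :=
  mem_image_of_mem _ ⟨hy, hyx⟩

theorem rieszKantorovichSet_smul [PosSMulMono ℝ E] {F G : obDual E} {x : E} {c : ℝ} (hc : 0 < c) :
    rieszKantorovichSet F G (c • x) = c • rieszKantorovichSet F G x := by
  have key : ∀ y, c • ((F : E →ₗ[ℝ] ℝ) y + (G : E →ₗ[ℝ] ℝ) (x - y)) =
      (F : E →ₗ[ℝ] ℝ) (c • y) + (G : E →ₗ[ℝ] ℝ) (c • x - c • y) := fun y => by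
    rw [← smul_sub, map_smul, map_smul, smul_add]
  ext r
  rw [Set.mem_smul_set]
  constructor
  · rintro ⟨y, ⟨hy, hyx⟩, rfl⟩
    refine ⟨_, apply_add_apply_sub_mem_rieszKantorovichSet
      (smul_nonneg (inv_nonneg.2 hc.le) hy) ?_, ?_⟩
    · simpa only [inv_smul_smul₀ hc.ne'] using
        smul_le_smul_of_nonneg_left hyx (inv_nonneg.2 hc.le)
    · dsimp only
      rw [key, smul_inv_smul₀ hc.ne']
  · rintro ⟨_, ⟨y, ⟨hy, hyx⟩, rfl⟩, rfl⟩
    rw [key]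
    exact apply_add_apply_sub_mem_rieszKantorovichSet (smul_nonneg hc.le hy)
      (smul_le_smul_of_nonneg_left hyx hc.le)

variable [AddLeftMono E]

theorem mem_obDual_of_nonneg {P : E →ₗ[ℝ] ℝ} (hP : ∀ x, 0 ≤ x → 0 ≤ P x) :
    P ∈ obDual E := by
  intro w
  refine ⟨P w, fun x hwx hxw => abs_le.2 ⟨?_, ?_⟩⟩
  · have := hP (x + w) (neg_le_iff_add_nonneg.1 hwx)
    rw [map_add] at this
    linarith
  · have := hP (w - x) (sub_nonneg.2 hxw)
    rw [map_sub] at this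
    linarith

theorem obDual_apply_mono {f : obDual E} (hf : 0 ≤ f) {a b : E} (h : a ≤ b) :
    (f : E →ₗ[ℝ] ℝ) a ≤ (f : E →ₗ[ℝ] ℝ) b := by
  simpa using hf (b - a) (sub_nonneg.2 h)

theorem exists_abs_apply_le (F : obDual E) {w : E} (hw : 0 ≤ w) :
    ∃ M : ℝ, ∀ x : E, 0 ≤ x → x ≤ w → |(F : E →ₗ[ℝ] ℝ) x| ≤ M := by
  obtain ⟨M, hM⟩ := F.2 w
  exact ⟨M, fun x hx hxw => hM x ((neg_nonpos.2 hw).trans hx) hxw⟩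

theorem bddAbove_rieszKantorovichSet {F G : obDual E} {x : E} (hx : 0 ≤ x) :
    BddAbove (rieszKantorovichSet F G x) := by
  obtain ⟨M, hM⟩ := exists_abs_apply_le F hx
  obtain ⟨N, hN⟩ := exists_abs_apply_le G hx
  refine ⟨M + N, ?_⟩
  rintro _ ⟨y, ⟨hy, hyx⟩, rfl⟩
  have h₁ := (abs_le.1 (hM y hy hyx)).2
  have h₂ := (abs_le.1 (hN (x - y) (sub_nonneg.2 hyx) (sub_le_self x hy))).2
  dsimp only
  linarith

theorem rieszKantorovichSet_add (hE : RieszDecomposition E) {F G : obDual E} {x y : E}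
    (hx : 0 ≤ x) (hy : 0 ≤ y) :
    rieszKantorovichSet F G (x + y) = rieszKantorovichSet F G x + rieszKantorovichSet F G y := by
  ext r
  constructor
  · rintro ⟨v, ⟨hv, hvxy⟩, rfl⟩
    obtain ⟨v₁, hv₁, hv₁x, hv₂, hv₂y⟩ := hE.decompose v x y hv hvxy hx hy
    refine ⟨_, apply_add_apply_sub_mem_rieszKantorovichSet hv₁ hv₁x, _,
      apply_add_apply_sub_mem_rieszKantorovichSet hv₂ hv₂y, ?_⟩
    dsimp only
    rw [add_add_add_comm, ← map_add, ← map_add, add_sub_cancel]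
    congr 2
    abel
  · rintro ⟨_, ⟨v, ⟨hv, hvx⟩, rfl⟩, _, ⟨u, ⟨hu, huy⟩, rfl⟩, rfl⟩
    refine ⟨v + u, ⟨add_nonneg hv hu, add_le_add hvx huy⟩, ?_⟩
    simp only [add_sub_add_comm, map_add]
    ring

variable [PosSMulMono ℝ E]

theorem exists_linearMap_eq_on_nonneg (hE : RieszDecomposition E) (S : E → ℝ)
    (hadd : ∀ x y, 0 ≤ x → 0 ≤ y → S (x + y) = S x + S y)
    (hsmul : ∀ (c : ℝ) x, 0 < c → 0 ≤ x → S (c • x) = c * S x) :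
    ∃ T : E →ₗ[ℝ] ℝ, ∀ x, 0 ≤ x → T x = S x := by
  have hS0 : S 0 = 0 := by simpa using hadd 0 0 le_rfl le_rfl
  choose p n hp hn hpn using hE.exists_sub
  have hP : ∀ x p' n', 0 ≤ p' → 0 ≤ n' → x = p' - n' →
      S (p x) - S (n x) = S p' - S n' := by
    intro x p' n' hp' hn' hx
    have h : p x + n' = p' + n x := by
      rw [← sub_eq_sub_iff_add_eq_add, ← hpn, ← hx]
    have := congrArg S h
    rw [hadd _ _ (hp x) hn', hadd _ _ hp' (hn x)] at this
    linarith
  let T : E →ₗ[ℝ] ℝ :=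
    { toFun := fun x => S (p x) - S (n x)
      map_add' := fun x y => by
        rw [hP (x + y) _ _ (add_nonneg (hp x) (hp y)) (add_nonneg (hn x) (hn y))
          (by rw [add_sub_add_comm, ← hpn, ← hpn]), hadd _ _ (hp x) (hp y),
          hadd _ _ (hn x) (hn y)]
        ring
      map_smul' := fun c x => by
        rcases lt_trichotomy c 0 with hc | rfl | hc
        · rw [hP (c • x) ((-c) • n x) ((-c) • p x) (smul_nonneg (by linarith) (hn x))
            (smul_nonneg (by linarith) (hp x))
            (by rw [← smul_sub, neg_smul, ← smul_neg, neg_sub, ← hpn x]),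
            hsmul _ _ (by linarith) (hn x), hsmul _ _ (by linarith) (hp x)]
          simp only [RingHom.id_apply, smul_eq_mul]
          ring
        · rw [hP _ 0 0 le_rfl le_rfl (by simp)]
          simp
        · rw [hP (c • x) (c • p x) (c • n x) (smul_nonneg hc.le (hp x))
            (smul_nonneg hc.le (hn x)) (by rw [← smul_sub, ← hpn x]),
            hsmul _ _ hc (hp x), hsmul _ _ hc (hn x)]
          simp only [RingHom.id_apply, smul_eq_mul]
          ring }
  refine ⟨T, fun x hx => ?_⟩
  show S (p x) - S (n x) = S x
  simpa [hS0] using hP x x 0 hx le_rfl (sub_zero x).symm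

theorem exists_obDual_eq_on_nonneg (hE : RieszDecomposition E) (S : E → ℝ)
    (hadd : ∀ x y, 0 ≤ x → 0 ≤ y → S (x + y) = S x + S y)
    (hsmul : ∀ (c : ℝ) x, 0 < c → 0 ≤ x → S (c • x) = c * S x)
    (G : obDual E) (hG : ∀ x, 0 ≤ x → (G : E →ₗ[ℝ] ℝ) x ≤ S x) :
    ∃ T : obDual E, ∀ x, 0 ≤ x → (T : E →ₗ[ℝ] ℝ) x = S x := by
  obtain ⟨T, hT⟩ := exists_linearMap_eq_on_nonneg hE S hadd hsmul
  have hTG : T - G ∈ obDual E := mem_obDual_of_nonneg fun x hx => by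
    simpa [hT x hx] using hG x hx
  exact ⟨⟨T, by simpa using add_mem G.2 hTG⟩, hT⟩

theorem exists_sup_obDual (hE : RieszDecomposition E) (F G : obDual E) :
    ∃ H : obDual E, F ≤ H ∧ G ≤ H ∧ (∀ K, F ≤ K → G ≤ K → H ≤ K) ∧
      ∀ x y, 0 ≤ y → y ≤ x →
        (F : E →ₗ[ℝ] ℝ) y + (G : E →ₗ[ℝ] ℝ) (x - y) ≤ (H : E →ₗ[ℝ] ℝ) x := by
  have memF : ∀ x, 0 ≤ x → (F : E →ₗ[ℝ] ℝ) x ∈ rieszKantorovichSet F G x := fun x hx => by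
    simpa using apply_add_apply_sub_mem_rieszKantorovichSet (F := F) (G := G) hx le_rfl
  have memG : ∀ x, 0 ≤ x → (G : E →ₗ[ℝ] ℝ) x ∈ rieszKantorovichSet F G x := fun x hx => by
    simpa using apply_add_apply_sub_mem_rieszKantorovichSet (F := F) (G := G) le_rfl hx
  obtain ⟨H, hH⟩ := exists_obDual_eq_on_nonneg hE (fun x => sSup (rieszKantorovichSet F G x))
    (fun x y hx hy => by
      rw [rieszKantorovichSet_add hE hx hy, csSup_add ⟨_, memG x hx⟩
        (bddAbove_rieszKantorovichSet hx) ⟨_, memG y hy⟩ (bddAbove_rieszKantorovichSet hy)])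
    (fun c x hc _ => by
      rw [rieszKantorovichSet_smul hc, Real.sSup_smul_of_nonneg hc.le, smul_eq_mul])
    G (fun x hx => le_csSup (bddAbove_rieszKantorovichSet hx) (memG x hx))
  refine ⟨H, fun x hx => ?_, fun x hx => ?_, fun K hFK hGK x hx => ?_, fun x y hy hyx => ?_⟩
  · rw [hH x hx]
    exact le_csSup (bddAbove_rieszKantorovichSet hx) (memF x hx)
  · rw [hH x hx]
    exact le_csSup (bddAbove_rieszKantorovichSet hx) (memG x hx)
  · rw [hH x hx]
    refine csSup_le ⟨_, memG x hx⟩ ?_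
    rintro _ ⟨y, ⟨hy, hyx⟩, rfl⟩
    have hK : (K : E →ₗ[ℝ] ℝ) x = (K : E →ₗ[ℝ] ℝ) y + (K : E →ₗ[ℝ] ℝ) (x - y) := by
      rw [← map_add, add_sub_cancel]
    rw [hK]
    exact add_le_add (hFK y hy) (hGK (x - y) (sub_nonneg.2 hyx))
  · rw [hH x (hy.trans hyx)]
    exact le_csSup (bddAbove_rieszKantorovichSet (hy.trans hyx))
      (apply_add_apply_sub_mem_rieszKantorovichSet hy hyx)

theorem exists_isLUB_of_directedOn (hE : RieszDecomposition E) {A : Set (obDual E)}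
    (hne : A.Nonempty) (hdir : DirectedOn (· ≤ ·) A) (hbdd : BddAbove A) :
    ∃ s, IsLUB A s := by
  obtain ⟨U, hU⟩ := hbdd
  obtain ⟨a₀, ha₀⟩ := hne
  set V : E → Set ℝ := fun x => (fun a : obDual E => (a : E →ₗ[ℝ] ℝ) x) '' A
  have hVne : ∀ x, (V x).Nonempty := fun x => ⟨_, mem_image_of_mem _ ha₀⟩
  have hVbdd : ∀ x, 0 ≤ x → BddAbove (V x) := fun x hx => by
    refine ⟨(U : E →ₗ[ℝ] ℝ) x, ?_⟩
    rintro _ ⟨a, ha, rfl⟩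
    exact hU ha x hx
  have hadd : ∀ x y, 0 ≤ x → 0 ≤ y → sSup (V (x + y)) = sSup (V x) + sSup (V y) := by
    intro x y hx hy
    rw [← csSup_add (hVne x) (hVbdd x hx) (hVne y) (hVbdd y hy)]
    refine le_antisymm (csSup_le (hVne _) ?_) (csSup_le ((hVne x).add (hVne y)) ?_)
    · rintro _ ⟨a, ha, rfl⟩
      dsimp only
      rw [map_add]
      exact le_csSup ((hVbdd x hx).add (hVbdd y hy))
        (Set.add_mem_add (mem_image_of_mem _ ha) (mem_image_of_mem _ ha))
    · rintro _ ⟨_, ⟨a, ha, rfl⟩, _, ⟨b, hb, rfl⟩, rfl⟩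
      obtain ⟨c, hc, hac, hbc⟩ := hdir a ha b hb
      calc (a : E →ₗ[ℝ] ℝ) x + (b : E →ₗ[ℝ] ℝ) y
          ≤ (c : E →ₗ[ℝ] ℝ) x + (c : E →ₗ[ℝ] ℝ) y := add_le_add (hac x hx) (hbc y hy)
        _ ≤ sSup (V (x + y)) := by
          rw [← map_add]
          exact le_csSup (hVbdd _ (add_nonneg hx hy)) (mem_image_of_mem _ hc)
  have hsmul : ∀ (c : ℝ) x, 0 < c → 0 ≤ x → sSup (V (c • x)) = c * sSup (V x) := by
    intro c x hc _
    have : V (c • x) = c • V x := by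
      simp only [V, ← Set.image_smul, Set.image_image, map_smul, smul_eq_mul]
    rw [this, Real.sSup_smul_of_nonneg hc.le, smul_eq_mul]
  obtain ⟨T, hT⟩ := exists_obDual_eq_on_nonneg hE (fun x => sSup (V x)) hadd hsmul a₀
    (fun x hx => le_csSup (hVbdd x hx) (mem_image_of_mem _ ha₀))
  refine ⟨T, fun a ha x hx => ?_, fun K hK x hx => ?_⟩
  · rw [hT x hx]
    exact le_csSup (hVbdd x hx) (mem_image_of_mem _ ha)
  · rw [hT x hx]
    refine csSup_le (hVne x) ?_
    rintro _ ⟨a, ha, rfl⟩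
    exact hK ha x hx

/- An `abbrev`, so that instance search sees its order as `instSubPre`. -/
noncomputable abbrev obDualLattice (hE : RieszDecomposition E) : Lattice (obDual E) :=
  let po : PartialOrder (obDual E) :=
    { instSubPre E (obDual E) with
      le_antisymm := fun _ _ h₁ h₂ =>
        obDual_ext_of_nonneg hE fun x hx => le_antisymm (h₁ x hx) (h₂ x hx) }
  let sup : obDual E → obDual E → obDual E := fun F G => (exists_sup_obDual hE F G).choose
  have hsup := fun F G => (exists_sup_obDual hE F G).choose_spec
  { po with
    sup := sup
    le_sup_left := fun F G => (hsup F G).1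
    le_sup_right := fun F G => (hsup F G).2.1
    sup_le := fun _ _ K h₁ h₂ => (hsup _ _).2.2.1 K h₁ h₂
    inf := fun F G => F + G - sup F G
    inf_le_left := fun F G => sub_le_iff_le_add.2 (add_le_add le_rfl (hsup F G).2.1)
    inf_le_right := fun F G => sub_le_iff_le_add'.2 (add_le_add (hsup F G).1 le_rfl)
    le_inf := fun K F G h₁ h₂ => le_sub_comm.1 <| (hsup F G).2.2.1 _
      (le_sub_iff_add_le.2 (add_le_add le_rfl h₂))
      (le_sub_iff_add_le.2 (by rw [add_comm F]; exact add_le_add le_rfl h₁)) }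

theorem inf_apply_le_of_obDualLattice (hE : RieszDecomposition E) (F G : obDual E) {x y : E}
    (hy : 0 ≤ y) (hyx : y ≤ x) :
    letI := obDualLattice hE
    ((F ⊓ G : obDual E) : E →ₗ[ℝ] ℝ) x ≤ (F : E →ₗ[ℝ] ℝ) y + (G : E →ₗ[ℝ] ℝ) (x - y) := by
  have h := (exists_sup_obDual hE F G).choose_spec.2.2.2 x (x - y) (sub_nonneg.2 hyx)
    (sub_le_self x hy)
  rw [sub_sub_cancel] at h
  show ((F + G - (exists_sup_obDual hE F G).choose : obDual E) : E →ₗ[ℝ] ℝ) x ≤ _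
  simp only [AddSubgroupClass.coe_sub, Submodule.coe_add, LinearMap.sub_apply,
    LinearMap.add_apply]
  have hF : (F : E →ₗ[ℝ] ℝ) x = (F : E →ₗ[ℝ] ℝ) y + (F : E →ₗ[ℝ] ℝ) (x - y) := by
    rw [← map_add, add_sub_cancel]
  have hG : (G : E →ₗ[ℝ] ℝ) x = (G : E →ₗ[ℝ] ℝ) y + (G : E →ₗ[ℝ] ℝ) (x - y) := by
    rw [← map_add, add_sub_cancel]
  linarith

end OrderBoundedDual

def IsDedekindComplete (V : Type*) [Preorder V] : Prop :=
  ∀ A : Set V, A.Nonempty → BddAbove A → ∃ s, IsLUB A s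

section EventualUpperBounds

variable {V : Type*} {ι : Type*} [Preorder ι]

def eventualUpperBounds [Preorder V] (a : ι → V) : Set V := {d | ∀ᶠ β in atTop, a β ≤ d}

variable [Lattice V] [AddCommGroup V] [AddLeftMono V]

theorem IsLUB.inf_le_of_forall_inf_le {A : Set V} {s c m : V} (hs : IsLUB A s)
    (h : ∀ a ∈ A, a ⊓ c ≤ m) : s ⊓ c ≤ m := by
  have hs' : s ≤ m + (s - c)⁺ := hs.2 fun a ha => calc
    a = a ⊓ c + (a - c)⁺ := by rw [inf_eq_sub_posPart_sub, sub_add_cancel]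
    _ ≤ m + (s - c)⁺ := add_le_add (h a ha) (posPart_mono (sub_le_sub_right (hs.1 ha) c))
  rw [inf_eq_sub_posPart_sub]
  exact sub_le_iff_le_add.2 hs'

theorem eventualUpperBounds_abs_sub_nonempty {y : ι → V} {b t : V} (l : V)
    (h : ∀ᶠ β in atTop, b ≤ y β ∧ y β ≤ t) :
    (eventualUpperBounds fun β => |y β - l|).Nonempty :=
  ⟨(t - l) ⊔ (l - b), h.mono fun β hβ => abs_le'.2
    ⟨le_sup_of_le_left (sub_le_sub_right hβ.2 l),
      le_sup_of_le_right ((neg_sub (y β) l).le.trans (sub_le_sub_left hβ.1 l))⟩⟩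

variable [IsDirected ι (· ≤ ·)] [Nonempty ι]

theorem inf_le_of_eventually_inf_le (hV : IsDedekindComplete V) {a : ι → V}
    (hbdd : (eventualUpperBounds a).Nonempty) {q c m : V}
    (hq : q ∈ lowerBounds (eventualUpperBounds a)) (h : ∀ᶠ β in atTop, a β ⊓ c ≤ m) :
    q ⊓ c ≤ m := by
  obtain ⟨w, hw⟩ := hbdd
  obtain ⟨α₀, hα₀⟩ := eventually_atTop.1 (Filter.Eventually.and hw h)
  obtain ⟨p, hp⟩ := hV (a '' Ici α₀) ⟨a α₀, mem_image_of_mem _ self_mem_Ici⟩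
    ⟨w, by rintro _ ⟨β, hβ, rfl⟩; exact (hα₀ β hβ).1⟩
  have hqp : q ≤ p := hq (eventually_atTop.2 ⟨α₀, fun β hβ => hp.1 (mem_image_of_mem _ hβ)⟩)
  refine (inf_le_inf_right c hqp).trans (hp.inf_le_of_forall_inf_le ?_)
  rintro _ ⟨β, hβ, rfl⟩
  exact (hα₀ β hβ).2

theorem isGLB_eventualUpperBounds (hV : IsDedekindComplete V) {a : ι → V} (ha : ∀ β, 0 ≤ a β)
    (hbdd : (eventualUpperBounds a).Nonempty)
    (h : ∀ c ∈ lowerBounds (eventualUpperBounds a), ∀ β, c ⊓ a β ≤ 0) :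
    IsGLB (eventualUpperBounds a) 0 := by
  refine ⟨fun d hd => ?_, fun c hc => ?_⟩
  · obtain ⟨β, hβ⟩ := Filter.Eventually.exists (f := atTop) hd
    exact (ha β).trans hβ
  · rw [← inf_idem c]
    refine inf_le_of_eventually_inf_le hV hbdd hc (Eventually.of_forall fun β => ?_)
    rw [inf_comm]
    exact h c hc β

theorem oConvTo_of_isGLB_eventualUpperBounds [Module ℝ V] {y : ι → V} {l : V}
    (hne : (eventualUpperBounds fun β => |y β - l|).Nonempty)
    (hglb : IsGLB (eventualUpperBounds fun β => |y β - l|) 0) : OConvTo y l := by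
  refine ⟨_, hne, fun d₁ hd₁ d₂ hd₂ => ⟨d₁ ⊓ d₂, ?_, inf_le_left, inf_le_right⟩, hglb,
    fun d hd => ?_⟩
  · exact (Filter.Eventually.and hd₁ hd₂).mono fun β h => le_inf h.1 h.2
  · obtain ⟨α₀, hα₀⟩ := eventually_atTop.1 hd
    refine ⟨α₀, fun β hβ => ?_⟩
    obtain ⟨h₁, h₂⟩ := abs_le'.1 (hα₀ β hβ)
    exact ⟨sub_le_comm.1 (by rwa [neg_sub] at h₂), sub_le_iff_le_add'.1 h₁⟩

end EventualUpperBounds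

section Bidual

variable {X : Type*} [Lattice X] [AddCommGroup X] [AddLeftMono X] [Module ℝ X] [PosSMulMono ℝ X]

theorem exists_nonneg_le_apply_eq_posPart {f : obDual X} (hf : 0 ≤ f) (z : X) :
    ∃ g : obDual X, 0 ≤ g ∧ g ≤ f ∧ (g : X →ₗ[ℝ] ℝ) z = (f : X →ₗ[ℝ] ℝ) z⁺ := by
  set N : X → ℝ := fun v => (f : X →ₗ[ℝ] ℝ) v⁺
  let p := LinearPMap.mkSpanSingleton' (σ := RingHom.id ℝ) z ((f : X →ₗ[ℝ] ℝ) z⁺)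
    fun c hc => by
      rcases eq_or_ne c 0 with rfl | hc0
      · exact zero_smul ℝ _
      · rw [(smul_eq_zero.1 hc).resolve_left hc0, posPart_zero, map_zero, smul_zero]
  have hpN : ∀ v : p.domain, p v ≤ N v := by
    rintro ⟨v, hv⟩
    obtain ⟨c, rfl⟩ := Submodule.mem_span_singleton.1 hv
    rw [LinearPMap.mkSpanSingleton'_apply, RingHom.id_apply, smul_eq_mul]
    rcases le_or_gt c 0 with hc | hc
    · exact (mul_nonpos_of_nonpos_of_nonneg hc (by simpa using hf _ (posPart_nonneg z))).trans
        (by simpa using hf _ (posPart_nonneg _))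
    · simp only [N, posPart_smul_of_pos hc, map_smul, smul_eq_mul, le_refl]
  obtain ⟨g, hgp, hgN⟩ := exists_extension_of_le_sublinear p N
    (fun c hc v => by simp only [N, posPart_smul_of_pos hc, map_smul, smul_eq_mul])
    (fun v w => by
      simpa only [N, map_add] using obDual_apply_mono hf
        (show (v + w)⁺ ≤ v⁺ + w⁺ from sup_le (add_le_add (le_posPart v) (le_posPart w))
          (add_nonneg (posPart_nonneg v) (posPart_nonneg w))))
    hpN
  have hg : ∀ v, 0 ≤ v → 0 ≤ g v := fun v hv => by
    simpa [N, posPart_eq_zero.2 (neg_nonpos.2 hv)] using hgN (-v)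
  have hgf : ∀ v, 0 ≤ v → g v ≤ (f : X →ₗ[ℝ] ℝ) v := fun v hv => by
    simpa [N, posPart_eq_self.2 hv] using hgN v
  refine ⟨⟨g, mem_obDual_of_nonneg hg⟩, fun v hv => by simpa using hg v hv, hgf, ?_⟩
  rw [hgp ⟨z, Submodule.mem_span_singleton_self z⟩]
  exact LinearPMap.mkSpanSingleton'_apply_self _ _ _ _

theorem rieszDecomposition_obDual : RieszDecomposition (obDual X) :=
  letI := obDualLattice (rieszDecomposition_of_lattice (E := X))
  rieszDecomposition_of_lattice

noncomputable instance instBidualLattice : Lattice (obDual (obDual X)) :=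
  obDualLattice rieszDecomposition_obDual

instance instBidualAddLeftMono : AddLeftMono (obDual (obDual X)) :=
  instSubAddLeftMono (E := obDual X) (obDual (obDual X))

theorem isDedekindComplete_bidual : IsDedekindComplete (obDual (obDual X)) := by
  intro A hne hbdd
  obtain ⟨s, hs⟩ := exists_isLUB_of_directedOn rieszDecomposition_obDual
    (hne.mono subset_supClosure) supClosed_supClosure.directedOn
    (by rwa [BddAbove, upperBounds_supClosure])
  exact ⟨s, isLUB_supClosure.1 hs⟩

theorem hatEl_mono : Monotone (hatEl X (obDual X)) := fun _ _ h _ hf =>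
  obDual_apply_mono hf h

theorem hatEl_neg (a : X) : hatEl X (obDual X) (-a) = -hatEl X (obDual X) a :=
  Subtype.ext (LinearMap.ext fun f => map_neg (f : X →ₗ[ℝ] ℝ) a)

theorem hatEl_sub (a b : X) :
    hatEl X (obDual X) (a - b) = hatEl X (obDual X) a - hatEl X (obDual X) b :=
  Subtype.ext (LinearMap.ext fun f => map_sub (f : X →ₗ[ℝ] ℝ) a b)

theorem abs_hatEl_le (a : X) : |hatEl X (obDual X) a| ≤ hatEl X (obDual X) |a| :=
  abs_le'.2 ⟨hatEl_mono (le_abs_self a), hatEl_neg a ▸ hatEl_mono (neg_le_abs a)⟩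

theorem inf_hatEl_le (a u : X) :
    hatEl X (obDual X) a ⊓ hatEl X (obDual X) u ≤ hatEl X (obDual X) (a ⊓ u) := by
  intro f hf
  obtain ⟨g, hg, hgf, hgz⟩ := exists_nonneg_le_apply_eq_posPart hf (u - a)
  refine (inf_apply_le_of_obDualLattice rieszDecomposition_obDual _ _ hg hgf).trans_eq ?_
  show (g : X →ₗ[ℝ] ℝ) a + ((f - g : obDual X) : X →ₗ[ℝ] ℝ) u = (f : X →ₗ[ℝ] ℝ) (a ⊓ u)
  rw [inf_comm, inf_eq_sub_posPart_sub, map_sub, ← hgz]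
  simp only [AddSubgroupClass.coe_sub, LinearMap.sub_apply, map_sub]
  ring

theorem inf_hatEl_le_zero (hreg : HatRegular X) {ι : Type*} [Preorder ι]
    [IsDirected ι (· ≤ ·)] [Nonempty ι] {x : ι → X} {l : X} (huo : uoConvTo x l)
    (hbdd : (eventualUpperBounds fun β =>
      |hatEl X (obDual X) (x β) - hatEl X (obDual X) l|).Nonempty) {c : obDual (obDual X)}
    (hc : c ∈ lowerBounds (eventualUpperBounds fun β =>
      |hatEl X (obDual X) (x β) - hatEl X (obDual X) l|)) {u : X} (hu : 0 ≤ u) :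
    c ⊓ hatEl X (obDual X) u ≤ 0 := by
  obtain ⟨D, hDne, hDdir, hDglb, hD⟩ := huo u hu
  refine (hreg D hDne hDdir hDglb).2 ?_
  rintro _ ⟨d, hd, rfl⟩
  obtain ⟨α₀, hα₀⟩ := hD d hd
  refine inf_le_of_eventually_inf_le isDedekindComplete_bidual hbdd hc
    (eventually_atTop.2 ⟨α₀, fun β hβ => ?_⟩)
  calc |hatEl X (obDual X) (x β) - hatEl X (obDual X) l| ⊓ hatEl X (obDual X) u
      ≤ hatEl X (obDual X) |x β - l| ⊓ hatEl X (obDual X) u :=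
        inf_le_inf_right _ (hatEl_sub (x β) l ▸ abs_hatEl_le _)
    _ ≤ hatEl X (obDual X) (|x β - l| ⊓ u) := inf_hatEl_le _ _
    _ ≤ hatEl X (obDual X) d := hatEl_mono (by simpa using (hα₀ β hβ).2)

end Bidual

theorem statement8_general {X : Type u} [Lattice X] [AddCommGroup X]
    [CovariantClass X X (· + ·) (· ≤ ·)] [Module ℝ X] [PosSMulMono ℝ X]
    (hreg : HatRegular X)
    {ι : Type v} [Preorder ι] [Nonempty ι] [IsDirected ι (· ≤ ·)]
    (x : ι → X) (l : X) (h : bbuoConvTo x l) :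
    OConvTo (fun α => hatEl X (obDual X) (x α)) (hatEl X (obDual X) l) := by
  obtain ⟨huo, b, t, α₁, hbt⟩ := h
  have hbdd := eventualUpperBounds_abs_sub_nonempty (hatEl X (obDual X) l)
    (eventually_atTop.2 ⟨α₁, hbt⟩)
  refine oConvTo_of_isGLB_eventualUpperBounds hbdd
    (isGLB_eventualUpperBounds isDedekindComplete_bidual (fun β => abs_nonneg _) hbdd
      fun c hc β => ?_)
  calc c ⊓ |hatEl X (obDual X) (x β) - hatEl X (obDual X) l|
      ≤ c ⊓ hatEl X (obDual X) |x β - l| :=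
        inf_le_inf_left c (hatEl_sub (x β) l ▸ abs_hatEl_le _)
    _ ≤ 0 := inf_hatEl_le_zero hreg huo hbdd hc (abs_nonneg _)

/-- If the canonical image of `X` is regular in `X~~` and `x_α` bbuo-converges
to `x`, then `x̂_α` order converges to `x̂` in `X~~`. -/
theorem statement8 {X : Type u} [Lattice X] [AddCommGroup X]
    [CovariantClass X X (· + ·) (· ≤ ·)] [Module ℝ X] [PosSMulMono ℝ X]
    (harch : IsArch X)
    (hsep : SepPoints X) (hreg : HatRegular X)
    {ι : Type v} [Preorder ι] [Nonempty ι] [IsDirected ι (· ≤ ·)]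
    (x : ι → X) (l : X) (h : bbuoConvTo x l) :
    OConvTo (fun α => hatEl X (obDual X) (x α)) (hatEl X (obDual X) l) :=
  statement8_general hreg x l h
end

section
/- Let X be a Banach lattice and y an order continuous linear functional on X. If y(x_n) → 0 for every disjoint sequence x_n in X whose canonical image is order bounded in X**, then y(x_α) → 0 for every net x_α that is uo-null in X and whose canonical image is eventually order bounded in X**. -/
set_option linter.unusedSectionVars false
set_option maxHeartbeats 1000000

open Filter Set

section VL

variable (X : Type*) [Lattice X] [AddCommGroup X]
  [CovariantClass X X (· + ·) (· ≤ ·)] [Module ℝ X] [PosSMulMono ℝ X]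

/-- Shortcut instance (added in the port): the order of `X~~`, which instance search
no longer finds by itself; it is `instSubPre` itself. -/
noncomputable instance instSubPreBidual : Preorder ↥(obDual ↥(obDual X)) :=
  instSubPre ↥(obDual X) (obDual ↥(obDual X))

end VL

/-!
Write `|y|` for the modulus of `y` on `X₊`, given by the Riesz–Kantorovich formulas; order
continuity of `y` makes `y` order bounded and `|y|` order continuous. Split
`|x_α| = |x_α| ⊓ u + (|x_α| - u)⁺`. Along the uo-null net the first part is eventually below any
element of a set decreasing to `0`, so its `|y|`-value is small. For the second part the
disjoint-sequence hypothesis gives one `u ≥ 0` making `|y|((|x_α| - u)⁺)` uniformly small on the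
tail: otherwise the Aliprantis–Burkinshaw construction extracts from the tail a disjoint sequence,
dominated by the `|x_α|`, on which `y` stays away from `0`. That sequence is b-order bounded
because a b-order bound `z` of `x̂` also bounds the image of `|x|`: by Hahn–Banach, `f |x| = g x`
for some `g` with `|g| ≤ f`. Hahn–Banach also provides positive norming functionals, so the tail
is norm bounded, as the construction requires.
-/

open Topology

section LatticeOrderedGroup

variable {X : Type*} [Lattice X] [AddCommGroup X] [IsOrderedAddMonoid X]

theorem inf_add_posPart_sub (a u : X) : a ⊓ u + (a - u)⁺ = a := by
  rw [show (a - u)⁺ = a - a ⊓ u by rw [sub_inf, sub_self, posPart_def, sup_comm],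
    add_sub_cancel]

theorem posPart_add_le (a b : X) : (a + b)⁺ ≤ a⁺ + b⁺ :=
  sup_le (add_le_add (le_posPart a) (le_posPart b))
    (add_nonneg (posPart_nonneg a) (posPart_nonneg b))

theorem posPart_le_posPart_sub_add {c : X} (hc : 0 ≤ c) (b : X) : b⁺ ≤ (b - c)⁺ + c :=
  sup_le (by simpa using add_le_add_left (le_posPart (b - c)) c)
    (add_nonneg (posPart_nonneg _) hc)

end LatticeOrderedGroup

section PositiveScalar

variable {X : Type*} [Lattice X] [AddCommGroup X] [Module ℝ X] [PosSMulMono ℝ X] {c : ℝ}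

theorem smul_sup_of_pos (hc : 0 < c) (a b : X) : c • (a ⊔ b) = c • a ⊔ c • b :=
  (OrderIso.smulRight hc).map_sup a b

theorem posPart_smul_of_pos_s19 (hc : 0 < c) (a : X) : (c • a)⁺ = c • a⁺ := by
  rw [posPart_def, posPart_def, smul_sup_of_pos hc, smul_zero]

theorem abs_smul_of_pos (hc : 0 < c) (a : X) : |c • a| = c • |a| := by
  rw [abs, abs, smul_sup_of_pos hc, smul_neg]

end PositiveScalar

theorem posPart_sub_smul_inf_posPart_sub_smul_eq_zero {X : Type*} [Lattice X] [AddCommGroup X]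
    [IsOrderedAddMonoid X] [Module ℝ X] [PosSMulMono ℝ X] {a b : X} (hb : 0 ≤ b) {s t : ℝ}
    (ht : 0 < t) (hst : 1 ≤ s * t) : (a - s • b)⁺ ⊓ (b - t • a)⁺ = 0 := by
  set e := (a - s • b)⁺ ⊓ (b - t • a)⁺
  have he : 0 ≤ e := le_inf (posPart_nonneg _) (posPart_nonneg _)
  have hpos : t • e ≤ (t • a - b)⁺ :=
    calc t • e ≤ t • (a - s • b)⁺ := smul_le_smul_of_nonneg_left inf_le_left ht.le
      _ = (t • a - (t * s) • b)⁺ := by rw [← posPart_smul_of_pos_s19 ht, smul_sub, smul_smul]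
      _ ≤ (t • a - b)⁺ := posPart_mono <| sub_le_sub_left
          (le_smul_of_one_le_left hb (by linarith [mul_comm s t])) _
  have hneg : e ≤ (t • a - b)⁻ := by rw [← posPart_neg, neg_sub]; exact inf_le_right
  suffices h : min t 1 • e ≤ 0 from
    le_antisymm ((smul_le_smul_iff_of_pos_left (lt_min ht one_pos)).mp (by rwa [smul_zero])) he
  calc min t 1 • e ≤ (t • a - b)⁺ ⊓ (t • a - b)⁻ :=
        le_inf ((smul_le_smul_of_nonneg_right (min_le_left _ _) he).trans hpos)
          ((smul_le_smul_of_nonneg_right (min_le_right _ _) he).trans (by rwa [one_smul]))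
    _ = 0 := posPart_inf_negPart_eq_zero _

section SolidNorm

variable {X : Type*} [NormedAddCommGroup X] [Lattice X] [IsOrderedAddMonoid X] [HasSolidNorm X]

theorem norm_le_norm_of_nonneg_of_le {a b : X} (ha : 0 ≤ a) (hab : a ≤ b) : ‖a‖ ≤ ‖b‖ :=
  norm_le_norm_of_abs_le_abs <| by rwa [abs_of_nonneg ha, abs_of_nonneg (ha.trans hab)]

theorem norm_posPart_le (a : X) : ‖a⁺‖ ≤ ‖a‖ :=
  norm_le_norm_of_abs_le_abs <| by
    rw [abs_of_nonneg (posPart_nonneg a)]; exact sup_le (le_abs_self a) (abs_nonneg a)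

end SolidNorm

theorem exists_linearMap_apply_eq_of_le_sublinear {E : Type*} [AddCommGroup E] [Module ℝ E]
    (N : E → ℝ) (N_hom : ∀ c : ℝ, 0 < c → ∀ x, N (c • x) = c * N x)
    (N_add : ∀ x y, N (x + y) ≤ N x + N y) {x : E} {r : ℝ} (hr : ∀ t : ℝ, t * r ≤ N (t • x)) :
    ∃ g : E →ₗ[ℝ] ℝ, g x = r ∧ ∀ v, g v ≤ N v := by
  have N_zero : N 0 = 0 := by
    have := N_hom 2 two_pos 0
    rw [smul_zero] at this
    linarith
  have H : ∀ t : ℝ, t • x = 0 → t • r = 0 := fun t ht => by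
    have h₁ := hr t
    have h₂ := hr (-t)
    rw [ht, N_zero] at h₁
    rw [neg_smul, ht, neg_zero, N_zero] at h₂
    rw [smul_eq_mul]
    linarith
  obtain ⟨g, hg, hgN⟩ :=
    exists_extension_of_le_sublinear (LinearPMap.mkSpanSingleton' x r H) N N_hom N_add (by
      rintro ⟨v, hv⟩
      obtain ⟨t, rfl⟩ := Submodule.mem_span_singleton.mp hv
      rw [LinearPMap.mkSpanSingleton'_apply]
      exact hr t)
  exact ⟨g, (hg ⟨x, Submodule.mem_span_singleton_self x⟩).trans
    (LinearPMap.mkSpanSingleton'_apply_self _ _ _ _), hgN⟩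

section PositiveDual

variable {X : Type*} [NormedAddCommGroup X] [Lattice X] [IsOrderedAddMonoid X] [HasSolidNorm X]
  [NormedSpace ℝ X] [PosSMulMono ℝ X]

theorem exists_dual_apply_eq_apply_abs {f : StrongDual ℝ X} (hf : ∀ v, 0 ≤ v → 0 ≤ f v) (x : X) :
    ∃ g : StrongDual ℝ X, g x = f |x| ∧ ∀ v, |g v| ≤ f |v| := by
  have f_mono := (monotone_iff_map_nonneg f).mpr hf
  obtain ⟨g, hgx, hgN⟩ := exists_linearMap_apply_eq_of_le_sublinear (fun v => f |v|)
    (fun c hc v => by simp only [abs_smul_of_pos hc, map_smul, smul_eq_mul])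
    (fun v w => by simp only [← map_add]; exact f_mono (abs_add_le v w))
    (x := x) (r := f |x|) (fun t => by
      rcases le_or_gt t 0 with ht | ht
      · exact (mul_nonpos_of_nonpos_of_nonneg ht (hf _ (abs_nonneg x))).trans (hf _ (abs_nonneg _))
      · simp only [abs_smul_of_pos ht, map_smul, smul_eq_mul, le_refl])
  have hg : ∀ v, |g v| ≤ f |v| := fun v =>
    abs_le.mpr ⟨by linarith [abs_neg v ▸ map_neg g v ▸ hgN (-v)], hgN v⟩
  refine ⟨g.mkContinuous ‖f‖ fun v => ?_, hgx, hg⟩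
  calc ‖g v‖ ≤ f |v| := hg v
    _ ≤ ‖f‖ * ‖|v|‖ := (le_abs_self _).trans (f.le_opNorm _)
    _ = ‖f‖ * ‖v‖ := by rw [norm_abs_eq_norm]

theorem apply_abs_le_of_forall_abs_apply_le {z : StrongDual ℝ (StrongDual ℝ X)} {x : X}
    (hx : ∀ f : StrongDual ℝ X, (∀ v, 0 ≤ v → 0 ≤ f v) → |f x| ≤ z f)
    {f : StrongDual ℝ X} (hf : ∀ v, 0 ≤ v → 0 ≤ f v) : f |x| ≤ z f := by
  obtain ⟨g, hgx, hg⟩ := exists_dual_apply_eq_apply_abs hf x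
  have hbounds : ∀ v, 0 ≤ v → |g v| ≤ f v := fun v hv => by
    simpa [abs_of_nonneg hv] using hg v
  have hadd := hx (f + g) fun v hv => by
    rw [add_apply]
    linarith [neg_le_of_abs_le (hbounds v hv)]
  have hsub := hx (f - g) fun v hv => by
    rw [sub_apply]
    linarith [le_of_abs_le (hbounds v hv)]
  simp only [add_apply, sub_apply, map_add, map_sub] at hadd hsub
  linarith [le_abs_self (f x + g x), neg_abs_le (f x - g x)]

theorem abs_apply_le_of_nonneg_of_le_abs {z : StrongDual ℝ (StrongDual ℝ X)} {x s : X}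
    (hx : ∀ f : StrongDual ℝ X, (∀ v, 0 ≤ v → 0 ≤ f v) → |f x| ≤ z f) (hs0 : 0 ≤ s)
    (hsx : s ≤ |x|) {f : StrongDual ℝ X} (hf : ∀ v, 0 ≤ v → 0 ≤ f v) : |f s| ≤ z f := by
  rw [abs_of_nonneg (hf s hs0)]
  exact ((monotone_iff_map_nonneg f).mpr hf hsx).trans (apply_abs_le_of_forall_abs_apply_le hx hf)

theorem exists_nonneg_dual_norm_le_one_apply_eq {x : X} (hx : 0 ≤ x) :
    ∃ h : StrongDual ℝ X, (∀ v, 0 ≤ v → 0 ≤ h v) ∧ ‖h‖ ≤ 1 ∧ h x = ‖x‖ := by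
  obtain ⟨h, hhx, hhN⟩ := exists_linearMap_apply_eq_of_le_sublinear (fun v => ‖v⁺‖)
    (fun c hc v => by simp only [posPart_smul_of_pos_s19 hc, norm_smul, Real.norm_of_nonneg hc.le])
    (fun v w => (norm_le_norm_of_nonneg_of_le (posPart_nonneg _) (posPart_add_le v w)).trans
      (norm_add_le _ _))
    (x := x) (r := ‖x‖) (fun t => by
      rcases le_or_gt t 0 with ht | ht
      · exact (mul_nonpos_of_nonpos_of_nonneg ht (norm_nonneg x)).trans (norm_nonneg _)
      · rw [posPart_smul_of_pos_s19 ht, posPart_eq_self.mpr hx, norm_smul, Real.norm_of_nonneg ht.le])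
  have hneg : ∀ v, -h v ≤ ‖v⁻‖ := fun v => by simpa [← posPart_neg] using hhN (-v)
  refine ⟨h.mkContinuous 1 fun v => ?_, fun v hv => ?_, ?_, hhx⟩
  · rw [Real.norm_eq_abs, one_mul, abs_le]
    exact ⟨neg_le.mp ((hneg v).trans (by simpa using norm_posPart_le (-v))),
      (hhN v).trans (norm_posPart_le v)⟩
  · simpa [negPart_eq_zero.mpr hv] using hneg v
  · exact LinearMap.mkContinuous_norm_le _ zero_le_one _

theorem norm_le_of_forall_abs_apply_le {z : StrongDual ℝ (StrongDual ℝ X)} {x : X}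
    (hx : ∀ f : StrongDual ℝ X, (∀ v, 0 ≤ v → 0 ≤ f v) → |f x| ≤ z f) : ‖x‖ ≤ ‖z‖ := by
  obtain ⟨h, hpos, hnorm, hhx⟩ := exists_nonneg_dual_norm_le_one_apply_eq (abs_nonneg x)
  calc ‖x‖ = h |x| := by rw [hhx, norm_abs_eq_norm]
    _ ≤ z h := apply_abs_le_of_forall_abs_apply_le hx hpos
    _ ≤ ‖z‖ * ‖h‖ := (le_abs_self _).trans (z.le_opNorm h)
    _ ≤ ‖z‖ := mul_le_of_le_one_right (norm_nonneg z) hnorm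

end PositiveDual

section RieszKantorovich

/-- `posPartFun y` and `absFun y` are the Riesz–Kantorovich formulas for `y⁺` and `|y|`; they are
only meaningful on the positive cone. -/
noncomputable def posPartFun {X : Type*} [AddCommGroup X] [Preorder X] [Module ℝ X]
    (y : X →ₗ[ℝ] ℝ) (u : X) : ℝ :=
  sSup (y '' Icc 0 u)

noncomputable def absFun {X : Type*} [AddCommGroup X] [Preorder X] [Module ℝ X]
    (y : X →ₗ[ℝ] ℝ) (u : X) : ℝ :=
  posPartFun y u + posPartFun (-y) u

section Preorder

variable {X : Type*} [AddCommGroup X] [Preorder X] [Module ℝ X] {y : X →ₗ[ℝ] ℝ}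

theorem image_Icc_nonempty (y : X →ₗ[ℝ] ℝ) {u : X} (hu : 0 ≤ u) : (y '' Icc 0 u).Nonempty :=
  ⟨y 0, mem_image_of_mem y ⟨le_rfl, hu⟩⟩

theorem posPartFun_le {u : X} (hu : 0 ≤ u) {c : ℝ} (h : ∀ v ∈ Icc 0 u, y v ≤ c) :
    posPartFun y u ≤ c :=
  csSup_le (image_Icc_nonempty y hu) (forall_mem_image.mpr h)

theorem exists_lt_abs_apply_of_lt_absFun {u : X} (hu : 0 ≤ u) {c : ℝ} (h : c < absFun y u) :
    ∃ w ∈ Icc 0 u, c / 2 < |y w| := by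
  rcases lt_or_ge (c / 2) (posPartFun y u) with hc | hc
  · obtain ⟨_, ⟨w, hw, rfl⟩, hlt⟩ := exists_lt_of_lt_csSup (image_Icc_nonempty y hu) hc
    exact ⟨w, hw, hlt.trans_le (le_abs_self _)⟩
  · obtain ⟨_, ⟨w, hw, rfl⟩, hlt⟩ := exists_lt_of_lt_csSup (image_Icc_nonempty (-y) hu)
      (show c / 2 < posPartFun (-y) u by rw [absFun] at h; linarith)
    exact ⟨w, hw, hlt.trans_le (neg_le_abs _)⟩

end Preorder

section OrderedGroup

variable {X : Type*} [AddCommGroup X] [PartialOrder X] [IsOrderedAddMonoid X] [Module ℝ X]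
  {y : X →ₗ[ℝ] ℝ}

theorem bddAbove_image_Icc_of_mem_obDual (hy : y ∈ obDual X) (u : X) :
    BddAbove (y '' Icc 0 u) := by
  obtain ⟨M, hM⟩ := hy u
  refine ⟨M, forall_mem_image.mpr fun v ⟨hv0, hvu⟩ => (le_abs_self _).trans (hM v ?_ hvu)⟩
  exact (neg_nonpos.mpr (hv0.trans hvu)).trans hv0

theorem le_posPartFun (hy : y ∈ obDual X) {u v : X} (hv : v ∈ Icc 0 u) : y v ≤ posPartFun y u :=
  le_csSup (bddAbove_image_Icc_of_mem_obDual hy u) (mem_image_of_mem y hv)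

theorem posPartFun_nonneg (hy : y ∈ obDual X) {u : X} (hu : 0 ≤ u) : 0 ≤ posPartFun y u := by
  simpa using le_posPartFun hy ⟨le_rfl, hu⟩

theorem posPartFun_mono (hy : y ∈ obDual X) {u u' : X} (hu : 0 ≤ u) (huu' : u ≤ u') :
    posPartFun y u ≤ posPartFun y u' :=
  posPartFun_le hu fun _ hv => le_posPartFun hy ⟨hv.1, hv.2.trans huu'⟩

theorem absFun_nonneg (hy : y ∈ obDual X) {u : X} (hu : 0 ≤ u) : 0 ≤ absFun y u :=
  add_nonneg (posPartFun_nonneg hy hu) (posPartFun_nonneg (neg_mem hy) hu)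

theorem absFun_mono (hy : y ∈ obDual X) {u u' : X} (hu : 0 ≤ u) (huu' : u ≤ u') :
    absFun y u ≤ absFun y u' :=
  add_le_add (posPartFun_mono hy hu huu') (posPartFun_mono (neg_mem hy) hu huu')

theorem posPartFun_smul_le [PosSMulMono ℝ X] (hy : y ∈ obDual X) {c : ℝ} (hc : 0 < c) {u : X}
    (hu : 0 ≤ u) : posPartFun y (c • u) ≤ c * posPartFun y u := by
  refine posPartFun_le (smul_nonneg hc.le hu) fun v ⟨hv0, hvu⟩ => ?_
  rw [← smul_inv_smul₀ hc.ne' v, map_smul, smul_eq_mul]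
  refine mul_le_mul_of_nonneg_left (le_posPartFun hy ⟨smul_nonneg (inv_nonneg.mpr hc.le) hv0, ?_⟩)
    hc.le
  rwa [inv_smul_le_iff_of_pos hc]

theorem absFun_smul_le [PosSMulMono ℝ X] (hy : y ∈ obDual X) {c : ℝ} (hc : 0 < c) {u : X}
    (hu : 0 ≤ u) : absFun y (c • u) ≤ c * absFun y u := by
  rw [absFun, absFun, mul_add]
  exact add_le_add (posPartFun_smul_le hy hc hu) (posPartFun_smul_le (neg_mem hy) hc hu)

end OrderedGroup

variable {X : Type*} [Lattice X] [AddCommGroup X] [IsOrderedAddMonoid X] [Module ℝ X]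
  {y : X →ₗ[ℝ] ℝ}

open Pointwise in
theorem posPartFun_add (hy : y ∈ obDual X) {u v : X} (hu : 0 ≤ u) (hv : 0 ≤ v) :
    posPartFun y (u + v) = posPartFun y u + posPartFun y v := by
  apply le_antisymm
  · refine posPartFun_le (add_nonneg hu hv) fun w ⟨hw0, hwuv⟩ => ?_
    rw [← inf_add_posPart_sub w u, map_add]
    refine add_le_add (le_posPartFun hy ⟨le_inf hw0 hu, inf_le_right⟩)
      (le_posPartFun hy ⟨posPart_nonneg _, sup_le ?_ hv⟩)
    rwa [sub_le_iff_le_add']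
  · rw [posPartFun, posPartFun, ← csSup_add (image_Icc_nonempty y hu)
      (bddAbove_image_Icc_of_mem_obDual hy u) (image_Icc_nonempty y hv)
      (bddAbove_image_Icc_of_mem_obDual hy v)]
    refine csSup_le ((image_Icc_nonempty y hu).add (image_Icc_nonempty y hv)) ?_
    rintro _ ⟨_, ⟨w₁, ⟨hw₁0, hw₁u⟩, rfl⟩, _, ⟨w₂, ⟨hw₂0, hw₂v⟩, rfl⟩, rfl⟩
    simpa only [map_add] using le_posPartFun hy ⟨add_nonneg hw₁0 hw₂0, add_le_add hw₁u hw₂v⟩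

theorem absFun_add (hy : y ∈ obDual X) {u v : X} (hu : 0 ≤ u) (hv : 0 ≤ v) :
    absFun y (u + v) = absFun y u + absFun y v := by
  rw [absFun, absFun, absFun, posPartFun_add hy hu hv, posPartFun_add (neg_mem hy) hu hv]
  ring

theorem absFun_eq_absFun_inf_add (hy : y ∈ obDual X) {a u : X} (ha : 0 ≤ a) (hu : 0 ≤ u) :
    absFun y a = absFun y (a ⊓ u) + absFun y (a - u)⁺ := by
  rw [← absFun_add hy (le_inf ha hu) (posPart_nonneg _), inf_add_posPart_sub]

theorem abs_apply_le_absFun (hy : y ∈ obDual X) {w u : X} (hwu : |w| ≤ u) :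
    |y w| ≤ absFun y u := by
  have hpos : w⁺ ∈ Icc 0 u := ⟨posPart_nonneg w, (sup_le (le_abs_self w) (abs_nonneg w)).trans hwu⟩
  have hneg : w⁻ ∈ Icc 0 u := ⟨negPart_nonneg w, (sup_le (neg_le_abs w) (abs_nonneg w)).trans hwu⟩
  have h₁ := le_posPartFun hy hpos
  have h₂ := le_posPartFun hy hneg
  have h₃ := le_posPartFun (neg_mem hy) hpos
  have h₄ := le_posPartFun (neg_mem hy) hneg
  rw [LinearMap.neg_apply] at h₃ h₄
  rw [absFun, ← posPart_sub_negPart w, map_sub, abs_le]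
  constructor <;> linarith

end RieszKantorovich

section OrderContinuity

theorem OrdContE.neg {E : Type*} [AddCommGroup E] [Preorder E] [Module ℝ E] {y : E →ₗ[ℝ] ℝ}
    (hy : OrdContE y) : OrdContE (-y) := fun D hne hdir hglb ε hε => by
  simpa only [LinearMap.neg_apply, abs_neg] using hy D hne hdir hglb ε hε

theorem OrdContE.tendsto_of_antitone {E : Type*} [AddCommGroup E] [Preorder E] [Module ℝ E]
    {y : E →ₗ[ℝ] ℝ} (hy : OrdContE y) {t : ℕ → E} (ht : Antitone t) (h0 : IsGLB (range t) 0) :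
    Tendsto (fun n => y (t n)) atTop (𝓝 0) := by
  rw [Metric.tendsto_atTop]
  intro ε hε
  obtain ⟨_, ⟨N, rfl⟩, hN⟩ :=
    hy (range t) (range_nonempty t) (directedOn_range.mpr ht.directed_ge) h0 ε hε
  exact ⟨N, fun n hn => by simpa [Real.dist_eq] using hN (t n) ⟨n, rfl⟩ (ht hn)⟩

section VectorLattice

variable {X : Type*} [Lattice X] [AddCommGroup X] [IsOrderedAddMonoid X] [Module ℝ X]
  {y : X →ₗ[ℝ] ℝ}

theorem OrdContE.exists_posPartFun_lt (hy : OrdContE y) (hyb : y ∈ obDual X) {D : Set X}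
    (hne : D.Nonempty) (hdir : DirectedOn (· ≥ ·) D) (hglb : IsGLB D 0) {ε : ℝ} (hε : 0 < ε) :
    ∃ d ∈ D, posPartFun y d < ε := by
  -- Take `w ∈ [0, d₀]` almost attaining `y⁺ d₀`. Since `w ⊓ d ↓ 0` along `D`, some `d₁ ≤ d₀` has
  -- `y (w ⊓ d₁)` small, and then `y⁺ d₁ = y⁺ d₀ - y⁺ (d₀ - d₁) ≤ y⁺ d₀ - y (w - d₁)⁺` is small.
  by_contra! hD
  obtain ⟨d₀, hd₀⟩ := hne
  have hD0 : ∀ d ∈ D, 0 ≤ d := fun d hd => hglb.1 hd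
  obtain ⟨_, ⟨w, ⟨hw0, hwd₀⟩, rfl⟩, hw⟩ := exists_lt_of_lt_csSup (image_Icc_nonempty y (hD0 d₀ hd₀))
    (show posPartFun y d₀ - ε / 2 < posPartFun y d₀ by linarith)
  have hwD : IsGLB ((w ⊓ ·) '' D) 0 :=
    ⟨forall_mem_image.mpr fun d hd => le_inf hw0 (hD0 d hd),
      fun b hb => hglb.2 fun d hd => (hb ⟨d, hd, rfl⟩).trans inf_le_right⟩
  obtain ⟨_, ⟨d, hd, rfl⟩, hsmall⟩ := hy _ ((nonempty_of_mem hd₀).image _)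
    (hdir.mono_comp fun _ _ h => inf_le_inf_left w h) hwD (ε / 2) (half_pos hε)
  obtain ⟨d₁, hd₁, hd₁d, hd₁d₀⟩ := hdir d hd d₀ hd₀
  have h₁ : |y (w ⊓ d₁)| < ε / 2 := hsmall _ ⟨d₁, hd₁, rfl⟩ (inf_le_inf_left w hd₁d)
  have h₂ : y w = y (w ⊓ d₁) + y (w - d₁)⁺ := by rw [← map_add, inf_add_posPart_sub]
  have h₃ : y (w - d₁)⁺ ≤ posPartFun y (d₀ - d₁) :=
    le_posPartFun hyb ⟨posPart_nonneg _, sup_le (sub_le_sub_right hwd₀ _) (sub_nonneg.mpr hd₁d₀)⟩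
  have h₄ : posPartFun y d₀ = posPartFun y (d₀ - d₁) + posPartFun y d₁ := by
    rw [← posPartFun_add hyb (sub_nonneg.mpr hd₁d₀) (hD0 d₁ hd₁), sub_add_cancel]
  linarith [hD d₁ hd₁, (abs_lt.mp h₁).2]

theorem OrdContE.exists_absFun_lt (hy : OrdContE y) (hyb : y ∈ obDual X) {D : Set X}
    (hne : D.Nonempty) (hdir : DirectedOn (· ≥ ·) D) (hglb : IsGLB D 0) {ε : ℝ} (hε : 0 < ε) :
    ∃ d ∈ D, absFun y d < ε := by
  obtain ⟨d₁, hd₁, h₁⟩ := hy.exists_posPartFun_lt hyb hne hdir hglb (half_pos hε)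
  obtain ⟨d₂, hd₂, h₂⟩ := hy.neg.exists_posPartFun_lt (neg_mem hyb) hne hdir hglb (half_pos hε)
  obtain ⟨d, hd, hdd₁, hdd₂⟩ := hdir d₁ hd₁ d₂ hd₂
  have hd0 : 0 ≤ d := hglb.1 hd
  refine ⟨d, hd, ?_⟩
  rw [absFun]
  linarith [posPartFun_mono hyb hd0 hdd₁, posPartFun_mono (neg_mem hyb) hd0 hdd₂]

end VectorLattice

variable {X : Type*} [NormedAddCommGroup X] [Lattice X] [IsOrderedAddMonoid X] [HasSolidNorm X]
  [NormedSpace ℝ X] [PosSMulMono ℝ X] [CompleteSpace X] {y : X →ₗ[ℝ] ℝ}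

theorem OrdContE.exists_bound (hy : OrdContE y) (u : X) : ∃ M, ∀ v ∈ Icc 0 u, |y v| ≤ M := by
  by_contra! h
  choose v hv hyv using fun n : ℕ => h (2 ^ n)
  set f : ℕ → X := fun k => (2⁻¹ : ℝ) ^ k • v k
  have hf0 : ∀ k, 0 ≤ f k := fun k => smul_nonneg (by positivity) (hv k).1
  have hsum : Summable f := .of_norm_bounded (summable_geometric_two.mul_right ‖u‖) fun k => by
    rw [norm_smul, Real.norm_of_nonneg (by positivity), one_div, inv_pow]
    exact mul_le_mul_of_nonneg_left (norm_le_norm_of_nonneg_of_le (hv k).1 (hv k).2) (by positivity)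
  -- The tails of `∑ f` decrease to `0`, so `y` tends to `0` along them, hence along `f`.
  set t : ℕ → X := fun n => ∑' k, f (k + n)
  have ht : ∀ n, t n = f n + t (n + 1) := fun n => by
    show ∑' k, f (k + n) = f n + ∑' k, f (k + (n + 1))
    rw [((summable_nat_add_iff n).mpr hsum).tsum_eq_zero_add, zero_add]
    exact congrArg _ (tsum_congr fun k => by rw [add_right_comm, add_assoc])
  have hanti : Antitone t := antitone_nat_of_succ_le fun n => by
    rw [ht n]; exact le_add_of_nonneg_left (hf0 n)
  have hlim := hy.tendsto_of_antitone hanti (isGLB_of_tendsto_atTop hanti (tendsto_sum_nat_add f))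
  have hyf : Tendsto (fun n => y (f n)) atTop (𝓝 0) := by
    have hdiff := hlim.sub (hlim.comp (tendsto_add_atTop_nat 1))
    rw [sub_zero] at hdiff
    exact hdiff.congr fun n => by
      simp only [Function.comp_apply, ht n, map_add, add_sub_cancel_right]
  obtain ⟨n, hn⟩ := (hyf.eventually (eventually_abs_sub_lt 0 one_pos)).exists
  have : 1 < |y (f n)| := by
    rw [map_smul, smul_eq_mul, abs_mul, abs_of_pos (by positivity)]
    calc (1 : ℝ) = 2⁻¹ ^ n * 2 ^ n := by rw [← mul_pow]; norm_num
      _ < 2⁻¹ ^ n * |y (v n)| := mul_lt_mul_of_pos_left (hyv n) (by positivity)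
  rw [sub_zero] at hn
  linarith

theorem OrdContE.mem_obDual (hy : OrdContE y) : y ∈ obDual X := by
  intro w
  obtain ⟨M, hM⟩ := hy.exists_bound w⁺
  refine ⟨M + M, fun v hwv hvw => ?_⟩
  rw [← posPart_sub_negPart v, map_sub]
  have h₁ := hM v⁺ ⟨posPart_nonneg v, posPart_mono hvw⟩
  have h₂ := hM v⁻ ⟨negPart_nonneg v, by rw [← posPart_neg]; exact posPart_mono (neg_le.mp hwv)⟩
  exact (abs_sub _ _).trans (add_le_add h₁ h₂)

end OrderContinuity

section DisjointSequence

theorem exists_seq_forall_partialSum {M : Type*} [AddCommMonoid M] [Module ℝ M] {A : Set M}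
    {P : M → M → Prop} (h : ∀ u, ∃ a ∈ A, P u a) (c : ℕ → ℝ) :
    ∃ a : ℕ → M, (∀ n, a n ∈ A) ∧
      ∀ n, P (c n • ∑ k ∈ Finset.range (n + 1), a k) (a (n + 1)) := by
  choose pick hpickA hpickP using h
  let S : ℕ → M := fun n => Nat.rec (pick 0) (fun n s => s + pick (c n • s)) n
  let a : ℕ → M := fun n => Nat.casesOn n (pick 0) fun n => pick (c n • S n)
  have hS : ∀ n, ∑ k ∈ Finset.range (n + 1), a k = S n := by
    intro n
    induction n with
    | zero => simp [a, S]
    | succ n ih => rw [Finset.sum_range_succ, ih]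
  exact ⟨a, fun n => by cases n <;> apply hpickA, fun n => by rw [hS]; apply hpickP⟩

/-- The pieces of the Aliprantis–Burkinshaw construction: when `w` dominates every `2⁻ᵏ • a k`,
removing a large multiple of the earlier terms and a small multiple of `w` (hence of every later
term) makes the pieces pairwise disjoint. -/
noncomputable def disjointPiece {X : Type*} [Lattice X] [AddCommGroup X] [Module ℝ X]
    (a : ℕ → X) (w : X) (n : ℕ) : X :=
  (a (n + 1) - (4 : ℝ) ^ (n + 1) • ∑ k ∈ Finset.range (n + 1), a k - (2⁻¹ : ℝ) ^ n • w)⁺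

variable {X : Type*} [Lattice X] [AddCommGroup X] [IsOrderedAddMonoid X] [Module ℝ X]
  [PosSMulMono ℝ X] {a : ℕ → X} {w : X}

theorem disjointPiece_le (ha : ∀ n, 0 ≤ a n) (hw : 0 ≤ w) (n : ℕ) :
    disjointPiece a w n ≤ a (n + 1) :=
  sup_le (by
    rw [sub_sub]
    exact sub_le_self _ (add_nonneg (smul_nonneg (by positivity)
      (Finset.sum_nonneg fun k _ => ha k)) (smul_nonneg (by positivity) hw))) (ha _)

theorem disjointPiece_inf_eq_zero (ha : ∀ n, 0 ≤ a n) (hw : ∀ k, (2⁻¹ : ℝ) ^ k • a k ≤ w)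
    {m n : ℕ} (hmn : m < n) : disjointPiece a w m ⊓ disjointPiece a w n = 0 := by
  have hw0 : 0 ≤ w := (smul_nonneg (by positivity) (ha 0)).trans (hw 0)
  have hS : ∀ n, 0 ≤ ∑ k ∈ Finset.range (n + 1), a k := fun n => Finset.sum_nonneg fun k _ => ha k
  have hn : disjointPiece a w n ≤ (a (n + 1) - (4 : ℝ) ^ (n + 1) • a (m + 1))⁺ := by
    refine posPart_mono ((sub_le_self _ (smul_nonneg (by positivity) hw0)).trans
      (sub_le_sub_left (smul_le_smul_of_nonneg_left ?_ (by positivity)) _))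
    exact Finset.single_le_sum (fun k _ => ha k) (Finset.mem_range.mpr (by omega))
  have hm : disjointPiece a w m ≤ (a (m + 1) - (2⁻¹ : ℝ) ^ (m + n + 1) • a (n + 1))⁺ := by
    refine posPart_mono (sub_le_sub ?_ ?_)
    · exact sub_le_self _ (smul_nonneg (by positivity) (hS m))
    · rw [show m + n + 1 = m + (n + 1) by omega, pow_add, ← smul_smul]
      exact smul_le_smul_of_nonneg_left (hw (n + 1)) (by positivity)
  have hst : 1 ≤ (4 : ℝ) ^ (n + 1) * (2⁻¹ : ℝ) ^ (m + n + 1) := by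
    rw [show (4 : ℝ) ^ (n + 1) = 2 ^ (n - m + 1) * 2 ^ (m + n + 1) by
      rw [← pow_add, show (4 : ℝ) = 2 ^ 2 by norm_num, ← pow_mul]; congr 1; omega,
      mul_assoc, ← mul_pow, mul_inv_cancel₀ two_ne_zero, one_pow, mul_one]
    exact one_le_pow₀ (by norm_num)
  refine le_antisymm ?_ (le_inf (posPart_nonneg _) (posPart_nonneg _))
  rw [inf_comm]
  exact (inf_le_inf hn hm).trans_eq
    (posPart_sub_smul_inf_posPart_sub_smul_eq_zero (ha _) (by positivity) hst)

theorem absFun_posPart_sub_le_disjointPiece {y : X →ₗ[ℝ] ℝ} (hy : y ∈ obDual X) (hw : 0 ≤ w)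
    (n : ℕ) :
    absFun y (a (n + 1) - (4 : ℝ) ^ (n + 1) • ∑ k ∈ Finset.range (n + 1), a k)⁺ ≤
      absFun y (disjointPiece a w n) + (2⁻¹ : ℝ) ^ n * absFun y w := by
  have hwn : 0 ≤ (2⁻¹ : ℝ) ^ n • w := smul_nonneg (by positivity) hw
  calc _ ≤ absFun y (disjointPiece a w n + (2⁻¹ : ℝ) ^ n • w) :=
        absFun_mono hy (posPart_nonneg _) (posPart_le_posPart_sub_add hwn _)
    _ = absFun y (disjointPiece a w n) + absFun y ((2⁻¹ : ℝ) ^ n • w) :=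
        absFun_add hy (posPart_nonneg _) hwn
    _ ≤ _ := add_le_add le_rfl (absFun_smul_le hy (by positivity) hw)

end DisjointSequence

section UniformTail

variable {X : Type*} [NormedAddCommGroup X] [Lattice X] [IsOrderedAddMonoid X] [HasSolidNorm X]
  [NormedSpace ℝ X] [PosSMulMono ℝ X] [CompleteSpace X] {y : X →ₗ[ℝ] ℝ} {A : Set X} {C ε : ℝ}

theorem exists_forall_smul_le_of_norm_le {a : ℕ → X} (ha : ∀ n, 0 ≤ a n) (hC : ∀ n, ‖a n‖ ≤ C) :
    ∃ w, ∀ k, (2⁻¹ : ℝ) ^ k • a k ≤ w := by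
  have hsum : Summable fun k => (2⁻¹ : ℝ) ^ k • a k :=
    .of_norm_bounded (summable_geometric_two.mul_right C) fun k => by
      rw [norm_smul, Real.norm_of_nonneg (by positivity), one_div, inv_pow]
      exact mul_le_mul_of_nonneg_left (hC k) (by positivity)
  exact ⟨_, fun k => hsum.le_tsum k fun j _ => smul_nonneg (by positivity) (ha j)⟩

theorem exists_disjoint_seq_lt_abs_apply (hy : y ∈ obDual X) (hA : ∀ a ∈ A, 0 ≤ a)
    (hC : ∀ a ∈ A, ‖a‖ ≤ C) (hε : 0 < ε) (h : ∀ u, 0 ≤ u → ∃ a ∈ A, ε < absFun y (a - u)⁺) :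
    ∃ s : ℕ → X, Pairwise (fun m n => s m ⊓ s n = 0) ∧ (∀ n, 0 ≤ s n ∧ ∃ a ∈ A, s n ≤ a) ∧
      ∀ n, ε / 4 < |y (s n)| := by
  obtain ⟨a, haA, hfar⟩ := exists_seq_forall_partialSum
    (P := fun u a => ε < absFun y (a - |u|)⁺) (fun u => h |u| (abs_nonneg u))
    fun n => (4 : ℝ) ^ (n + 1)
  have ha : ∀ n, 0 ≤ a n := fun n => hA _ (haA n)
  obtain ⟨w, hw⟩ := exists_forall_smul_le_of_norm_le ha fun n => hC _ (haA n)
  have hw0 : 0 ≤ w := (smul_nonneg (by positivity) (ha 0)).trans (hw 0)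
  obtain ⟨N, hN⟩ : ∃ N, (2⁻¹ : ℝ) ^ N * absFun y w < ε / 2 := by
    have := (tendsto_pow_atTop_nhds_zero_of_lt_one (r := (2⁻¹ : ℝ)) (by norm_num)
      (by norm_num)).mul_const (absFun y w)
    rw [zero_mul] at this
    exact (this.eventually (gt_mem_nhds (half_pos hε))).exists
  have hpiece : ∀ n, ε / 2 < absFun y (disjointPiece a w (N + n)) := fun n => by
    have hfar' := hfar (N + n)
    rw [abs_of_nonneg (smul_nonneg (by positivity) (Finset.sum_nonneg fun k _ => ha k))] at hfar'
    have hpow := mul_le_mul_of_nonneg_right (pow_le_pow_of_le_one (a := (2⁻¹ : ℝ))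
      (by norm_num) (by norm_num) (Nat.le_add_right N n)) (absFun_nonneg hy hw0)
    linarith [absFun_posPart_sub_le_disjointPiece (a := a) hy hw0 (N + n)]
  choose s hs hys using fun n => exists_lt_abs_apply_of_lt_absFun (posPart_nonneg _) (hpiece n)
  refine ⟨s, fun m n hmn => ?_, fun n => ⟨(hs n).1, a (N + n + 1), haA _,
    (hs n).2.trans (disjointPiece_le ha hw0 _)⟩, fun n => by linarith [hys n]⟩
  wlog hlt : m < n generalizing m n
  · rw [inf_comm]
    exact this n m hmn.symm (lt_of_le_of_ne (not_lt.mp hlt) hmn.symm)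
  refine le_antisymm ?_ (le_inf (hs m).1 (hs n).1)
  exact (inf_le_inf (hs m).2 (hs n).2).trans_eq (disjointPiece_inf_eq_zero ha hw (by omega))

theorem exists_forall_absFun_posPart_sub_le (hy : y ∈ obDual X) (hA : ∀ a ∈ A, 0 ≤ a)
    (hC : ∀ a ∈ A, ‖a‖ ≤ C)
    (hdisj : ∀ s : ℕ → X, Pairwise (fun m n => s m ⊓ s n = 0) →
      (∀ n, 0 ≤ s n ∧ ∃ a ∈ A, s n ≤ a) → Tendsto (fun n => y (s n)) atTop (𝓝 0))
    (hε : 0 < ε) : ∃ u, 0 ≤ u ∧ ∀ a ∈ A, absFun y (a - u)⁺ ≤ ε := by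
  by_contra! h
  obtain ⟨s, hs, hsA, hys⟩ := exists_disjoint_seq_lt_abs_apply hy hA hC hε h
  obtain ⟨n, hn⟩ :=
    ((hdisj s hs hsA).eventually (eventually_abs_sub_lt 0 (by positivity : 0 < ε / 4))).exists
  rw [sub_zero] at hn
  exact (hys n).not_gt hn

theorem exists_forall_absFun_posPart_abs_sub_le {ι : Type*} [Preorder ι] {x : ι → X} {α₀ : ι}
    {z : StrongDual ℝ (StrongDual ℝ X)} (hy : y ∈ obDual X)
    (hzx : ∀ α, α₀ ≤ α → ∀ f : StrongDual ℝ X, (∀ v, 0 ≤ v → 0 ≤ f v) → |f (x α)| ≤ z f)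
    (hdisj : ∀ s : ℕ → X, Pairwise (fun m n => s m ⊓ s n = 0) → (∀ n, 0 ≤ s n) →
      (∀ n, ∀ f : StrongDual ℝ X, (∀ v, 0 ≤ v → 0 ≤ f v) → |f (s n)| ≤ z f) →
      Tendsto (fun n => y (s n)) atTop (𝓝 0))
    (hε : 0 < ε) : ∃ u, 0 ≤ u ∧ ∀ α, α₀ ≤ α → absFun y (|x α| - u)⁺ ≤ ε := by
  obtain ⟨u, hu, htail⟩ := exists_forall_absFun_posPart_sub_le hy
    (A := (fun α => |x α|) '' Ici α₀) (forall_mem_image.mpr fun α _ => abs_nonneg (x α))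
    (forall_mem_image.mpr fun α hα =>
      (norm_abs_eq_norm (x α)).trans_le (norm_le_of_forall_abs_apply_le (hzx α hα)))
    (fun s hs hsA => hdisj s hs (fun n => (hsA n).1) fun n f hf => by
      obtain ⟨_, ⟨α, hα, rfl⟩, hsα⟩ := (hsA n).2
      exact abs_apply_le_of_nonneg_of_le_abs (hzx α hα) (hsA n).1 hsα hf)
    hε
  exact ⟨u, hu, fun α hα => htail _ ⟨α, hα, rfl⟩⟩

end UniformTail

open NormedSpace in
theorem statement19_general {X : Type u} [NormedAddCommGroup X] [Lattice X] [IsOrderedAddMonoid X] [HasSolidNorm X] [NormedSpace ℝ X]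
    [CompleteSpace X] [PosSMulMono ℝ X]
    (y : X →ₗ[ℝ] ℝ) (hy : OrdContE y)
    (hdseq : ∀ x : ℕ → X, (∀ m n, m ≠ n → |x m| ⊓ |x n| = 0) →
      (∃ z : StrongDual ℝ (StrongDual ℝ X), ∀ n, ∀ f : StrongDual ℝ X,
        (∀ v : X, 0 ≤ v → 0 ≤ f v) →
        -(z f) ≤ (inclusionInDoubleDual ℝ X (x n)) f ∧
          (inclusionInDoubleDual ℝ X (x n)) f ≤ z f) →
      Filter.Tendsto (fun n => y (x n)) Filter.atTop (nhds 0))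
    {ι : Type v} [Preorder ι] [IsDirected ι (· ≤ ·)]
    (x : ι → X) (huo : uoConvTo x 0)
    (hob : ∃ (z : StrongDual ℝ (StrongDual ℝ X)) (α₀ : ι), ∀ α, α₀ ≤ α →
      ∀ f : StrongDual ℝ X, (∀ v : X, 0 ≤ v → 0 ≤ f v) →
      -(z f) ≤ (inclusionInDoubleDual ℝ X (x α)) f ∧
        (inclusionInDoubleDual ℝ X (x α)) f ≤ z f) :
    Filter.Tendsto (fun α => y (x α)) Filter.atTop (nhds 0) := by
  obtain ⟨z, α₀, hz⟩ := hob
  have hzx : ∀ α, α₀ ≤ α → ∀ f : StrongDual ℝ X, (∀ v, 0 ≤ v → 0 ≤ f v) → |f (x α)| ≤ z f :=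
    fun α hα f hf => abs_le.mpr (hz α hα f hf)
  have hyb : y ∈ obDual X := hy.mem_obDual
  have hdisj : ∀ s : ℕ → X, Pairwise (fun m n => s m ⊓ s n = 0) → (∀ n, 0 ≤ s n) →
      (∀ n, ∀ f : StrongDual ℝ X, (∀ v, 0 ≤ v → 0 ≤ f v) → |f (s n)| ≤ z f) →
      Tendsto (fun n => y (s n)) atTop (𝓝 0) := fun s hs hs0 hsz =>
    hdseq s (fun m n hmn => by rw [abs_of_nonneg (hs0 m), abs_of_nonneg (hs0 n)]; exact hs hmn)
      ⟨z, fun n f hf => abs_le.mp (hsz n f hf)⟩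
  rw [NormedAddGroup.tendsto_nhds_zero]
  intro ε hε
  obtain ⟨u, hu, htail⟩ := exists_forall_absFun_posPart_abs_sub_le hyb hzx hdisj (half_pos hε)
  obtain ⟨D, hne, hdir, hglb, hconv⟩ := huo u hu
  obtain ⟨d, hdD, hd⟩ := hy.exists_absFun_lt hyb hne hdir hglb (half_pos hε)
  obtain ⟨α₁, hα₁⟩ := hconv d hdD
  obtain ⟨α₂, hα₀₂, hα₁₂⟩ := exists_ge_ge α₀ α₁
  filter_upwards [Ici_mem_atTop α₂] with α hα
  have hxu : |x α| ⊓ u ≤ d := by simpa using (hα₁ α (hα₁₂.trans hα)).2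
  have hinf : 0 ≤ |x α| ⊓ u := le_inf (abs_nonneg _) hu
  calc ‖y (x α)‖ ≤ absFun y |x α| := abs_apply_le_absFun hyb le_rfl
    _ = absFun y (|x α| ⊓ u) + absFun y (|x α| - u)⁺ :=
      absFun_eq_absFun_inf_add hyb (abs_nonneg _) hu
    _ < ε / 2 + ε / 2 := add_lt_add_of_lt_of_le ((absFun_mono hyb hinf hxu).trans_lt hd)
      (htail α (hα₀₂.trans hα))
    _ = ε := add_halves ε

open NormedSpace in
/-- If an order continuous functional `y` annihilates (in the limit) every
disjoint b-order bounded sequence, then `y(x_α) → 0` for every eventually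
b-order bounded uo-null net. -/
theorem statement19 {X : Type u} [NormedAddCommGroup X] [Lattice X] [IsOrderedAddMonoid X] [HasSolidNorm X] [NormedSpace ℝ X]
    [CompleteSpace X] [PosSMulMono ℝ X]
    (y : X →ₗ[ℝ] ℝ) (hy : OrdContE y)
    (hdseq : ∀ x : ℕ → X, (∀ m n, m ≠ n → |x m| ⊓ |x n| = 0) →
      (∃ z : StrongDual ℝ (StrongDual ℝ X), ∀ n, ∀ f : StrongDual ℝ X,
        (∀ v : X, 0 ≤ v → 0 ≤ f v) →
        -(z f) ≤ (inclusionInDoubleDual ℝ X (x n)) f ∧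
          (inclusionInDoubleDual ℝ X (x n)) f ≤ z f) →
      Filter.Tendsto (fun n => y (x n)) Filter.atTop (nhds 0))
    {ι : Type v} [Preorder ι] [Nonempty ι] [IsDirected ι (· ≤ ·)]
    (x : ι → X) (huo : uoConvTo x 0)
    (hob : ∃ (z : StrongDual ℝ (StrongDual ℝ X)) (α₀ : ι), ∀ α, α₀ ≤ α →
      ∀ f : StrongDual ℝ X, (∀ v : X, 0 ≤ v → 0 ≤ f v) →
      -(z f) ≤ (inclusionInDoubleDual ℝ X (x α)) f ∧
        (inclusionInDoubleDual ℝ X (x α)) f ≤ z f) :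
    Filter.Tendsto (fun α => y (x α)) Filter.atTop (nhds 0) :=
  statement19_general y hy hdseq x huo hob
end
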